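/- In A(Γ₁), the intersection of the subgroup generated by {a, b, c, d, ef, h} with the subgroup generated by {a, b, c, e} equals the subgroup generated by {a, b, c}. -/

import Mathlib

/-
The character `χ : A(Γ₁) → ℤ` (`efCharacter`) with `e ↦ 1`, `f ↦ -1` and all other generators
`↦ 0` kills `a, b, c, d, ef, h`, hence the whole first subgroup. Since `e` commutes with `a`, `b`
and `c`, every element of `⟨a, b, c, e⟩` has the form `y eⁿ` with `y ∈ ⟨a, b, c⟩`, and
`χ (y eⁿ) = n`. So an element of the intersection has `n = 0`, i.e. lies in `⟨a, b, c⟩`.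
-/

open scoped commutatorElement

/-- The defining relators of the right-angled Artin group on a simple graph `G`:
the commutators of the generators corresponding to adjacent vertices. -/
def raagRels {V : Type*} (G : SimpleGraph V) : Set (FreeGroup V) :=
  {r | ∃ u v : V, G.Adj u v ∧ r = ⁅FreeGroup.of u, FreeGroup.of v⁆}

/-- The right-angled Artin group on a simple graph `G`. -/
abbrev RAAG {V : Type*} (G : SimpleGraph V) : Type _ := PresentedGroup (raagRels G)

/-- The generator of the right-angled Artin group corresponding to a vertex. -/
def gen {V : Type*} (G : SimpleGraph V) (v : V) : RAAG G := PresentedGroup.of v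

/-- Vertices of the graph Γ₁. -/
inductive V1 : Type | a | b | c | d | e | f | g | h
deriving DecidableEq

/-- The graph Γ₁ with edges ab, bc, cd, da, ea, eb, ec, ed, fa, fb, fc, fd, ef,
ga, gb, gc, ge, ha, hb, hd, hf. -/
def G1 : SimpleGraph V1 := SimpleGraph.fromRel (fun u v => (u, v) ∈
  ([(.a,.b),(.b,.c),(.c,.d),(.d,.a),
    (.e,.a),(.e,.b),(.e,.c),(.e,.d),
    (.f,.a),(.f,.b),(.f,.c),(.f,.d),(.e,.f),
    (.g,.a),(.g,.b),(.g,.c),(.g,.e),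
    (.h,.a),(.h,.b),(.h,.d),(.h,.f)] : List (V1 × V1)))

namespace Subgroup

variable {G : Type*} [Group G]

theorem exists_mul_zpow_eq_of_mem_closure_insert {S : Set G} {z x : G}
    (hcomm : ∀ s ∈ S, Commute z s) (hx : x ∈ closure (insert z S)) :
    ∃ y ∈ closure S, ∃ n : ℤ, y * z ^ n = x := by
  have hle : closure S ≤ normalizer (zpowers z : Set G) := by
    refine le_trans ?_ (centralizer_le_normalizer _)
    rw [le_centralizer_iff, centralizer_closure, zpowers_le, mem_centralizer_iff]
    exact fun s hs => (hcomm s hs).symm.eq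
  rw [Set.insert_eq, closure_union, sup_comm, ← zpowers_eq_closure, ← SetLike.mem_coe,
    coe_mul_of_left_le_normalizer_right _ _ hle] at hx
  obtain ⟨y, hy, w, ⟨n, rfl⟩, rfl⟩ := hx
  exact ⟨y, hy, n, rfl⟩

theorem inf_closure_insert_eq_closure {A : Type*} [Group A] {H : Subgroup G} {S : Set G}
    {z : G} (φ : G →* A) (hSH : closure S ≤ H) (hHφ : H ≤ φ.ker) (hz : ¬IsOfFinOrder (φ z))
    (hcomm : ∀ s ∈ S, Commute z s) :
    H ⊓ closure (insert z S) = closure S := by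
  refine le_antisymm ?_ (le_inf hSH (closure_mono (Set.subset_insert z S)))
  rintro x ⟨hxH, hx⟩
  obtain ⟨y, hy, n, rfl⟩ := exists_mul_zpow_eq_of_mem_closure_insert hcomm hx
  have hφ : φ z ^ n = φ z ^ (0 : ℤ) := by
    have hyx := hHφ hxH
    rw [MonoidHom.mem_ker, map_mul, hHφ (hSH hy), one_mul, map_zpow] at hyx
    rw [hyx, zpow_zero]
  obtain rfl : n = 0 := injective_zpow_iff_not_isOfFinOrder.mpr hz hφ
  simpa using hy

end Subgroup

namespace RAAG

variable {V : Type*} {G : SimpleGraph V}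

theorem gen_commute_of_adj {u v : V} (h : G.Adj u v) : Commute (gen G u) (gen G v) := by
  rw [← commutatorElement_eq_one_iff_commute]
  exact (map_commutatorElement (PresentedGroup.mk _) _ _).symm.trans
    ((QuotientGroup.eq_one_iff _).mpr (Subgroup.subset_normalClosure ⟨u, v, h, rfl⟩))

def lift {H : Type*} [Group H] (f : V → H) (hf : ∀ u v, G.Adj u v → Commute (f u) (f v)) :
    RAAG G →* H :=
  PresentedGroup.toGroup (f := f) <| by
    rintro _ ⟨u, v, huv, rfl⟩
    rw [map_commutatorElement, FreeGroup.lift_apply_of, FreeGroup.lift_apply_of]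
    exact commutatorElement_eq_one_iff_commute.mpr (hf u v huv)

@[simp]
theorem lift_gen {H : Type*} [Group H] (f : V → H)
    (hf : ∀ u v, G.Adj u v → Commute (f u) (f v)) (v : V) : lift f hf (gen G v) = f v :=
  PresentedGroup.toGroup.of _

end RAAG

def efCharacter : RAAG G1 →* Multiplicative ℤ :=
  RAAG.lift (fun
      | .e => Multiplicative.ofAdd 1
      | .f => Multiplicative.ofAdd (-1)
      | _ => 1)
    fun _ _ _ => Commute.all _ _

/-- In `A(Γ₁)`, the intersection of the subgroup generated by `{a, b, c, d, ef, h}` with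
the subgroup generated by `{a, b, c, e}` equals the subgroup generated by `{a, b, c}`. -/
theorem subgroup_intersection :
    Subgroup.closure
        ({gen G1 V1.a, gen G1 V1.b, gen G1 V1.c, gen G1 V1.d,
          gen G1 V1.e * gen G1 V1.f, gen G1 V1.h} : Set (RAAG G1)) ⊓
      Subgroup.closure
        ({gen G1 V1.a, gen G1 V1.b, gen G1 V1.c, gen G1 V1.e} : Set (RAAG G1)) =
    Subgroup.closure ({gen G1 V1.a, gen G1 V1.b, gen G1 V1.c} : Set (RAAG G1)) := by
  have hinsert : ({gen G1 V1.a, gen G1 V1.b, gen G1 V1.c, gen G1 V1.e} : Set (RAAG G1)) =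
      insert (gen G1 V1.e) {gen G1 V1.a, gen G1 V1.b, gen G1 V1.c} := by
    ext; simp only [Set.mem_insert_iff, Set.mem_singleton_iff]; tauto
  rw [hinsert]
  refine Subgroup.inf_closure_insert_eq_closure efCharacter ?_ ?_ ?_ ?_
  · exact Subgroup.closure_mono (by simp [Set.insert_subset_iff])
  · rw [Subgroup.closure_le]
    simp [Set.insert_subset_iff, efCharacter]
  · exact not_isOfFinOrder_of_isMulTorsionFree (by simp [efCharacter])
  · simp only [Set.mem_insert_iff, Set.mem_singleton_iff]
    rintro _ (rfl | rfl | rfl) <;>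
      exact RAAG.gen_commute_of_adj (by rw [G1, SimpleGraph.fromRel_adj]; decide)
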